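/- Let d ≥ 2, α ∈ (0,2) and r > 0, and let B := B(0,r) ⊂ ℝ^d. Define the Poisson kernel K_B(x,z) := c(d,α)·(r² − |x|²)^{α/2}·(|z|² − r²)^{−α/2}·|x−z|^{−d} for x ∈ B and z ∈ ℝ^d with |z| > r, where c(d,α) := Γ(d/2)·sin(πα/2)·π^{−d/2−1}. Then there exists a constant C = C(d,α) > 0, independent of r, such that for all x ∈ B, all z with |z| > r, and all 1 ≤ i,j ≤ d: |∇_x K_B(x,z)| ≤ C·K_B(x,z)/(r − |x|) and |∂²_{x_i x_j} K_B(x,z)| ≤ C·K_B(x,z)/(r − |x|)². -/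

import Mathlib

open MeasureTheory Metric Set
open scoped RealInnerProductSpace

set_option maxHeartbeats 1000000
set_option synthInstance.maxHeartbeats 400000

noncomputable section

/-- the second partial derivative `∂²f/∂xᵢ∂xⱼ (x)` -/
def secondPartial {d : ℕ} (f : EuclideanSpace ℝ (Fin d) → ℝ)
    (x : EuclideanSpace ℝ (Fin d)) (i j : Fin d) : ℝ :=
  fderiv ℝ (fun w => fderiv ℝ f w (EuclideanSpace.single i (1 : ℝ))) x
    (EuclideanSpace.single j (1 : ℝ))

/-- the Poisson kernel of the ball `B(0,r)` for the symmetric `α`-stable process -/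
def stablePoissonKernel (d : ℕ) (α r : ℝ) (x z : EuclideanSpace ℝ (Fin d)) : ℝ :=
  Real.Gamma ((d : ℝ) / 2) * Real.sin (Real.pi * α / 2) * Real.pi ^ (-(d : ℝ) / 2 - 1) *
    (r ^ 2 - ‖x‖ ^ 2) ^ (α / 2) * (‖z‖ ^ 2 - r ^ 2) ^ (-(α / 2)) * ‖x - z‖ ^ (-(d : ℝ))

def Gfun (d : ℕ) (α r : ℝ) (z w : EuclideanSpace ℝ (Fin d)) : ℝ :=
  (r ^ 2 - ‖w‖ ^ 2) ^ (α / 2) * (‖w - z‖ ^ 2) ^ (-((d : ℝ) / 2))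

def Dfun (d : ℕ) (α r : ℝ) (z x : EuclideanSpace ℝ (Fin d)) :
    EuclideanSpace ℝ (Fin d) →L[ℝ] ℝ :=
  Gfun d α r z x •
    ((-α / (r ^ 2 - ‖x‖ ^ 2)) • innerSL ℝ x + (-(d : ℝ) / ‖x - z‖ ^ 2) • innerSL ℝ (x - z))

def psiF (d : ℕ) (α r : ℝ) (z v w : EuclideanSpace ℝ (Fin d)) : ℝ :=
  -α * ((r ^ 2 - ‖w‖ ^ 2)⁻¹ * ⟪v, w⟫) + -(d : ℝ) * ((‖w - z‖ ^ 2)⁻¹ * ⟪v, w - z⟫)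

lemma Dfun_apply (d : ℕ) (α r : ℝ) (z x v : EuclideanSpace ℝ (Fin d)) :
    Dfun d α r z x v = Gfun d α r z x * psiF d α r z v x := by
  simp only [Dfun, psiF, ContinuousLinearMap.smul_apply, ContinuousLinearMap.add_apply,
    ContinuousLinearMap.coe_smul', Pi.smul_apply, innerSL_apply_apply, smul_eq_mul]
  rw [real_inner_comm x v, real_inner_comm (x - z) v]
  ring

lemma hasFDerivAt_Gfun (d : ℕ) (α r : ℝ) (z x : EuclideanSpace ℝ (Fin d))
    (hx : ‖x‖ < r) (hz : r < ‖z‖) :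
    HasFDerivAt (Gfun d α r z) (Dfun d α r z x) x := by
  have hA : 0 < r ^ 2 - ‖x‖ ^ 2 := by nlinarith [norm_nonneg x]
  have hxz : x - z ≠ 0 := by
    intro h; rw [sub_eq_zero] at h; subst h; linarith
  have hP : 0 < ‖x - z‖ ^ 2 := by
    have := norm_pos_iff.mpr hxz
    positivity
  have h1 : HasFDerivAt (fun w : EuclideanSpace ℝ (Fin d) => r ^ 2 - ‖w‖ ^ 2)
      ((-2 : ℝ) • innerSL ℝ x) x := by
    have := (hasFDerivAt_const (r ^ 2) x).sub (hasStrictFDerivAt_norm_sq x).hasFDerivAt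
    refine this.congr_fderiv ?_
    ext u; simp
  have h2 := (Real.hasDerivAt_rpow_const (p := α / 2) (Or.inl hA.ne')).comp_hasFDerivAt x h1
  have h3 : HasFDerivAt (fun w : EuclideanSpace ℝ (Fin d) => ‖w - z‖ ^ 2)
      ((2 : ℝ) • innerSL ℝ (x - z)) x := by
    have := ((hasFDerivAt_id x).sub_const z).norm_sq
    refine this.congr_fderiv ?_
    ext u; simp
  have h4 := (Real.hasDerivAt_rpow_const (p := -((d : ℝ) / 2)) (Or.inl hP.ne')).comp_hasFDerivAt x h3
  have h5 := h2.mul h4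
  refine h5.congr_fderiv ?_
  ext u
  simp only [Dfun, Gfun, ContinuousLinearMap.smul_apply, ContinuousLinearMap.add_apply,
    ContinuousLinearMap.coe_smul', Pi.smul_apply, innerSL_apply_apply, smul_eq_mul,
    Function.comp_apply]
  rw [Real.rpow_sub hA, Real.rpow_sub hP, Real.rpow_one, Real.rpow_one]
  field_simp
  ring

lemma hasFDerivAt_psiF (d : ℕ) (α r : ℝ) (z x v : EuclideanSpace ℝ (Fin d))
    (hx : ‖x‖ < r) (hz : r < ‖z‖) :
    HasFDerivAt (psiF d α r z v)
      ((-α) • (((r ^ 2 - ‖x‖ ^ 2)⁻¹) • innerSL ℝ v +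
          ⟪v, x⟫ • ((-((r ^ 2 - ‖x‖ ^ 2) ^ 2)⁻¹) • ((-2 : ℝ) • innerSL ℝ x))) +
       (-(d : ℝ)) • (((‖x - z‖ ^ 2)⁻¹) • innerSL ℝ v +
          ⟪v, x - z⟫ • ((-((‖x - z‖ ^ 2) ^ 2)⁻¹) • ((2 : ℝ) • innerSL ℝ (x - z))))) x := by
  have hA : 0 < r ^ 2 - ‖x‖ ^ 2 := by nlinarith [norm_nonneg x]
  have hxz : x - z ≠ 0 := by
    intro h; rw [sub_eq_zero] at h; subst h; linarith
  have hP : 0 < ‖x - z‖ ^ 2 := by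
    have := norm_pos_iff.mpr hxz
    positivity
  have h1 : HasFDerivAt (fun w : EuclideanSpace ℝ (Fin d) => r ^ 2 - ‖w‖ ^ 2)
      ((-2 : ℝ) • innerSL ℝ x) x := by
    have := (hasFDerivAt_const (r ^ 2) x).sub (hasStrictFDerivAt_norm_sq x).hasFDerivAt
    refine this.congr_fderiv ?_
    ext u; simp
  have h3 : HasFDerivAt (fun w : EuclideanSpace ℝ (Fin d) => ‖w - z‖ ^ 2)
      ((2 : ℝ) • innerSL ℝ (x - z)) x := by
    have := ((hasFDerivAt_id x).sub_const z).norm_sq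
    refine this.congr_fderiv ?_
    ext u; simp
  have hAinv := (hasDerivAt_inv hA.ne').comp_hasFDerivAt x h1
  have hPinv := (hasDerivAt_inv hP.ne').comp_hasFDerivAt x h3
  have hIv : HasFDerivAt (fun w : EuclideanSpace ℝ (Fin d) => ⟪v, w⟫) (innerSL ℝ v) x :=
    (innerSL ℝ v).hasFDerivAt
  have hIv2 : HasFDerivAt (fun w : EuclideanSpace ℝ (Fin d) => ⟪v, w - z⟫) (innerSL ℝ v) x := by
    refine (hIv.sub_const ⟪v, z⟫).congr_of_eventuallyEq ?_
    filter_upwards with w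
    simp [inner_sub_right]
  exact ((hAinv.mul hIv).const_mul (-α)).add ((hPinv.mul hIv2).const_mul (-(d : ℝ)))

lemma abs_psiF_le (d : ℕ) (α r : ℝ) (z x v : EuclideanSpace ℝ (Fin d))
    (hα0 : 0 < α) (hx : ‖x‖ < r) (hz : r < ‖z‖) (hv : ‖v‖ = 1) :
    |psiF d α r z v x| ≤ (α + d) * (r - ‖x‖)⁻¹ := by
  have hn : (0 : ℝ) ≤ ‖x‖ := norm_nonneg x
  have hs : 0 < r - ‖x‖ := by linarith
  have hA : 0 < r ^ 2 - ‖x‖ ^ 2 := by nlinarith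
  have hxz : x - z ≠ 0 := by
    intro h; rw [sub_eq_zero] at h; subst h; linarith
  have hm0 : 0 < ‖x - z‖ := norm_pos_iff.mpr hxz
  have hm : r - ‖x‖ ≤ ‖x - z‖ := by
    have h1 := norm_sub_norm_le z x
    rw [norm_sub_rev] at h1
    linarith
  have hP : 0 < ‖x - z‖ ^ 2 := by positivity
  have K1 : (r ^ 2 - ‖x‖ ^ 2)⁻¹ * ‖x‖ ≤ (r - ‖x‖)⁻¹ := by
    rw [← div_eq_inv_mul, ← one_div, div_le_div_iff₀ hA hs]
    nlinarith
  have K3 : (‖x - z‖ ^ 2)⁻¹ * ‖x - z‖ ≤ (r - ‖x‖)⁻¹ := by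
    have h1 : (‖x - z‖ ^ 2)⁻¹ * ‖x - z‖ = ‖x - z‖⁻¹ := by
      rw [sq, mul_inv, mul_assoc, inv_mul_cancel₀ hm0.ne', mul_one]
    rw [h1]
    exact inv_anti₀ hs hm
  have e1 : |⟪v, x⟫| ≤ ‖x‖ := by
    have := abs_real_inner_le_norm v x
    rwa [hv, one_mul] at this
  have e2 : |⟪v, x - z⟫| ≤ ‖x - z‖ := by
    have := abs_real_inner_le_norm v (x - z)
    rwa [hv, one_mul] at this
  have hd0 : (0 : ℝ) ≤ (d : ℝ) := Nat.cast_nonneg d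
  calc |psiF d α r z v x|
      ≤ |(-α) * ((r ^ 2 - ‖x‖ ^ 2)⁻¹ * ⟪v, x⟫)| +
        |(-(d : ℝ)) * ((‖x - z‖ ^ 2)⁻¹ * ⟪v, x - z⟫)| := abs_add_le _ _
    _ = α * ((r ^ 2 - ‖x‖ ^ 2)⁻¹ * |⟪v, x⟫|) + (d : ℝ) * ((‖x - z‖ ^ 2)⁻¹ * |⟪v, x - z⟫|) := by
        rw [abs_mul, abs_mul, abs_mul, abs_mul, abs_neg, abs_neg, abs_of_pos hα0,
          abs_of_nonneg hd0, abs_of_pos (inv_pos.mpr hA), abs_of_pos (inv_pos.mpr hP)]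
    _ ≤ α * ((r ^ 2 - ‖x‖ ^ 2)⁻¹ * ‖x‖) + (d : ℝ) * ((‖x - z‖ ^ 2)⁻¹ * ‖x - z‖) := by
        gcongr
    _ ≤ α * (r - ‖x‖)⁻¹ + (d : ℝ) * (r - ‖x‖)⁻¹ := by
        gcongr
    _ = (α + d) * (r - ‖x‖)⁻¹ := by ring

lemma norm_smul_clm {d : ℕ} (c : ℝ) (L : EuclideanSpace ℝ (Fin d) →L[ℝ] ℝ) :
    ‖c • L‖ = |c| * ‖L‖ := by
  rw [norm_smul c L, Real.norm_eq_abs]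

lemma norm_Dfun_le (d : ℕ) (α r : ℝ) (z x : EuclideanSpace ℝ (Fin d))
    (hα0 : 0 < α) (hx : ‖x‖ < r) (hz : r < ‖z‖) (hG : 0 ≤ Gfun d α r z x) :
    ‖Dfun d α r z x‖ ≤ Gfun d α r z x * ((α + d) * (r - ‖x‖)⁻¹) := by
  have hn : (0 : ℝ) ≤ ‖x‖ := norm_nonneg x
  have hs : 0 < r - ‖x‖ := by linarith
  have hA : 0 < r ^ 2 - ‖x‖ ^ 2 := by nlinarith
  have hxz : x - z ≠ 0 := by
    intro h; rw [sub_eq_zero] at h; subst h; linarith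
  have hm0 : 0 < ‖x - z‖ := norm_pos_iff.mpr hxz
  have hm : r - ‖x‖ ≤ ‖x - z‖ := by
    have h1 := norm_sub_norm_le z x
    rw [norm_sub_rev] at h1
    linarith
  have hP : 0 < ‖x - z‖ ^ 2 := by positivity
  have hd0 : (0 : ℝ) ≤ (d : ℝ) := Nat.cast_nonneg d
  have K1 : (r ^ 2 - ‖x‖ ^ 2)⁻¹ * ‖x‖ ≤ (r - ‖x‖)⁻¹ := by
    rw [← div_eq_inv_mul, ← one_div, div_le_div_iff₀ hA hs]
    nlinarith
  have K3 : (‖x - z‖ ^ 2)⁻¹ * ‖x - z‖ ≤ (r - ‖x‖)⁻¹ := by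
    have h1 : (‖x - z‖ ^ 2)⁻¹ * ‖x - z‖ = ‖x - z‖⁻¹ := by
      rw [sq, mul_inv, mul_assoc, inv_mul_cancel₀ hm0.ne', mul_one]
    rw [h1]
    exact inv_anti₀ hs hm
  rw [Dfun, norm_smul_clm, abs_of_nonneg hG]
  gcongr
  calc ‖(-α / (r ^ 2 - ‖x‖ ^ 2)) • innerSL ℝ x + (-(d : ℝ) / ‖x - z‖ ^ 2) • innerSL ℝ (x - z)‖
      ≤ ‖(-α / (r ^ 2 - ‖x‖ ^ 2)) • innerSL ℝ x‖ + ‖(-(d : ℝ) / ‖x - z‖ ^ 2) • innerSL ℝ (x - z)‖ :=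
        norm_add_le _ _
    _ = α * ((r ^ 2 - ‖x‖ ^ 2)⁻¹ * ‖x‖) + (d : ℝ) * ((‖x - z‖ ^ 2)⁻¹ * ‖x - z‖) := by
        rw [norm_smul_clm, norm_smul_clm, innerSL_apply_norm, innerSL_apply_norm,
          abs_div, abs_div, abs_neg, abs_neg, abs_of_pos hα0,
          abs_of_nonneg hd0, abs_of_pos hA, abs_of_pos hP]
        field_simp
    _ ≤ α * (r - ‖x‖)⁻¹ + (d : ℝ) * (r - ‖x‖)⁻¹ := by gcongr
    _ = (α + d) * (r - ‖x‖)⁻¹ := by ring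

lemma norm_Mpsi_le (d : ℕ) (α r : ℝ) (z x v : EuclideanSpace ℝ (Fin d))
    (hα0 : 0 < α) (hx : ‖x‖ < r) (hz : r < ‖z‖) (hv : ‖v‖ = 1) :
    ‖(-α) • (((r ^ 2 - ‖x‖ ^ 2)⁻¹) • innerSL ℝ v +
          ⟪v, x⟫ • ((-((r ^ 2 - ‖x‖ ^ 2) ^ 2)⁻¹) • ((-2 : ℝ) • innerSL ℝ x))) +
       (-(d : ℝ)) • (((‖x - z‖ ^ 2)⁻¹) • innerSL ℝ v +
          ⟪v, x - z⟫ • ((-((‖x - z‖ ^ 2) ^ 2)⁻¹) • ((2 : ℝ) • innerSL ℝ (x - z))))‖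
      ≤ (3 * (α + d)) * ((r - ‖x‖)⁻¹ * (r - ‖x‖)⁻¹) := by
  have hn : (0 : ℝ) ≤ ‖x‖ := norm_nonneg x
  have hs : 0 < r - ‖x‖ := by linarith
  have hA : 0 < r ^ 2 - ‖x‖ ^ 2 := by nlinarith
  have hxz : x - z ≠ 0 := by
    intro h; rw [sub_eq_zero] at h; subst h; linarith
  have hm0 : 0 < ‖x - z‖ := norm_pos_iff.mpr hxz
  have hm : r - ‖x‖ ≤ ‖x - z‖ := by
    have h1 := norm_sub_norm_le z x
    rw [norm_sub_rev] at h1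
    linarith
  have hP : 0 < ‖x - z‖ ^ 2 := by positivity
  have hd0 : (0 : ℝ) ≤ (d : ℝ) := Nat.cast_nonneg d
  have K1 : (r ^ 2 - ‖x‖ ^ 2)⁻¹ * ‖x‖ ≤ (r - ‖x‖)⁻¹ := by
    rw [← div_eq_inv_mul, ← one_div, div_le_div_iff₀ hA hs]
    nlinarith
  have K2 : (r ^ 2 - ‖x‖ ^ 2)⁻¹ ≤ (r - ‖x‖)⁻¹ * (r - ‖x‖)⁻¹ := by
    rw [← mul_inv]
    exact inv_anti₀ (by positivity) (by nlinarith)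
  have K4 : (‖x - z‖ ^ 2)⁻¹ ≤ (r - ‖x‖)⁻¹ * (r - ‖x‖)⁻¹ := by
    rw [← mul_inv]
    refine inv_anti₀ (by positivity) ?_
    nlinarith
  have hA2 : ((r ^ 2 - ‖x‖ ^ 2) ^ 2)⁻¹ * (‖x‖ * ‖x‖) ≤ (r - ‖x‖)⁻¹ * (r - ‖x‖)⁻¹ := by
    have e : ((r ^ 2 - ‖x‖ ^ 2) ^ 2)⁻¹ * (‖x‖ * ‖x‖)
        = ((r ^ 2 - ‖x‖ ^ 2)⁻¹ * ‖x‖) * ((r ^ 2 - ‖x‖ ^ 2)⁻¹ * ‖x‖) := by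
      rw [sq, mul_inv]; ring
    rw [e]
    exact mul_le_mul K1 K1 (by positivity) (by positivity)
  have hP2 : ((‖x - z‖ ^ 2) ^ 2)⁻¹ * (‖x - z‖ * ‖x - z‖) ≤ (r - ‖x‖)⁻¹ * (r - ‖x‖)⁻¹ := by
    have e : ((‖x - z‖ ^ 2) ^ 2)⁻¹ * (‖x - z‖ * ‖x - z‖) = (‖x - z‖ ^ 2)⁻¹ := by
      field_simp
    rw [e]; exact K4
  have e1 : |⟪v, x⟫| ≤ ‖x‖ := by
    have := abs_real_inner_le_norm v x
    rwa [hv, one_mul] at this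
  have e2 : |⟪v, x - z⟫| ≤ ‖x - z‖ := by
    have := abs_real_inner_le_norm v (x - z)
    rwa [hv, one_mul] at this
  have hT1 : ‖((r ^ 2 - ‖x‖ ^ 2)⁻¹) • innerSL ℝ v +
      ⟪v, x⟫ • ((-((r ^ 2 - ‖x‖ ^ 2) ^ 2)⁻¹) • ((-2 : ℝ) • innerSL ℝ x))‖
      ≤ 3 * ((r - ‖x‖)⁻¹ * (r - ‖x‖)⁻¹) := by
    refine (norm_add_le _ _).trans ?_
    rw [norm_smul_clm, norm_smul_clm, norm_smul_clm, norm_smul_clm, innerSL_apply_norm,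
      innerSL_apply_norm, hv, mul_one,
      abs_of_pos (inv_pos.mpr hA), abs_neg, abs_of_pos (inv_pos.mpr (by positivity : (0:ℝ) < (r ^ 2 - ‖x‖ ^ 2) ^ 2)),
      abs_neg, abs_two]
    calc (r ^ 2 - ‖x‖ ^ 2)⁻¹ + |⟪v, x⟫| * (((r ^ 2 - ‖x‖ ^ 2) ^ 2)⁻¹ * (2 * ‖x‖))
        ≤ (r - ‖x‖)⁻¹ * (r - ‖x‖)⁻¹ + ‖x‖ * (((r ^ 2 - ‖x‖ ^ 2) ^ 2)⁻¹ * (2 * ‖x‖)) := by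
          gcongr
        _ ≤ 3 * ((r - ‖x‖)⁻¹ * (r - ‖x‖)⁻¹) := by nlinarith [hA2]
  have hT2 : ‖((‖x - z‖ ^ 2)⁻¹) • innerSL ℝ v +
      ⟪v, x - z⟫ • ((-((‖x - z‖ ^ 2) ^ 2)⁻¹) • ((2 : ℝ) • innerSL ℝ (x - z)))‖
      ≤ 3 * ((r - ‖x‖)⁻¹ * (r - ‖x‖)⁻¹) := by
    refine (norm_add_le _ _).trans ?_
    rw [norm_smul_clm, norm_smul_clm, norm_smul_clm, norm_smul_clm, innerSL_apply_norm,
      innerSL_apply_norm, hv, mul_one,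
      abs_of_pos (inv_pos.mpr hP), abs_neg,
      abs_of_pos (inv_pos.mpr (by positivity : (0:ℝ) < (‖x - z‖ ^ 2) ^ 2)), abs_two]
    calc (‖x - z‖ ^ 2)⁻¹ + |⟪v, x - z⟫| * (((‖x - z‖ ^ 2) ^ 2)⁻¹ * (2 * ‖x - z‖))
        ≤ (r - ‖x‖)⁻¹ * (r - ‖x‖)⁻¹ + ‖x - z‖ * (((‖x - z‖ ^ 2) ^ 2)⁻¹ * (2 * ‖x - z‖)) := by
          gcongr
        _ ≤ 3 * ((r - ‖x‖)⁻¹ * (r - ‖x‖)⁻¹) := by nlinarith [hP2]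
  calc ‖_ + _‖ ≤ α * (3 * ((r - ‖x‖)⁻¹ * (r - ‖x‖)⁻¹)) + (d : ℝ) * (3 * ((r - ‖x‖)⁻¹ * (r - ‖x‖)⁻¹)) := by
        refine (norm_add_le _ _).trans ?_
        rw [norm_smul_clm, norm_smul_clm, abs_neg, abs_neg,
          abs_of_pos hα0, abs_of_nonneg hd0]
        gcongr
    _ = (3 * (α + d)) * ((r - ‖x‖)⁻¹ * (r - ‖x‖)⁻¹) := by ring

lemma poissonKernel_eq (d : ℕ) (α r : ℝ) (z w : EuclideanSpace ℝ (Fin d)) :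
    stablePoissonKernel d α r w z =
      (Real.Gamma ((d : ℝ) / 2) * Real.sin (Real.pi * α / 2) * Real.pi ^ (-(d : ℝ) / 2 - 1) *
        (‖z‖ ^ 2 - r ^ 2) ^ (-(α / 2))) * Gfun d α r z w := by
  have h : (‖w - z‖ ^ 2 : ℝ) ^ (-((d : ℝ) / 2)) = ‖w - z‖ ^ (-(d : ℝ)) := by
    have h2 : (‖w - z‖ : ℝ) ^ (2 : ℕ) = ‖w - z‖ ^ ((2 : ℕ) : ℝ) :=
      (Real.rpow_natCast _ 2).symm
    rw [h2, ← Real.rpow_mul (norm_nonneg _)]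
    congr 1
    push_cast
    ring
  rw [stablePoissonKernel, Gfun, h]
  ring

/-- gradient and second derivative estimates for the Poisson kernel
of a ball, with a constant independent of the radius. -/
theorem poissonKernel_derivative_estimates (d : ℕ) (hd : 2 ≤ d) (α : ℝ)
    (hα0 : 0 < α) (hα2 : α < 2) :
    ∃ C > 0, ∀ r : ℝ, 0 < r → ∀ x z : EuclideanSpace ℝ (Fin d), ‖x‖ < r → r < ‖z‖ →
      (‖fderiv ℝ (fun w => stablePoissonKernel d α r w z) x‖
          ≤ C * stablePoissonKernel d α r x z / (r - ‖x‖)) ∧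
      (∀ i j : Fin d, |secondPartial (fun w => stablePoissonKernel d α r w z) x i j|
          ≤ C * stablePoissonKernel d α r x z / (r - ‖x‖) ^ 2) := by
  have hdpos : (0 : ℝ) < d := by
    have : (0 : ℕ) < d := by omega
    exact_mod_cast this
  refine ⟨((d : ℝ) + 2) ^ 2 + 3 * (d : ℝ) + 6, by positivity, ?_⟩
  intro r hr x z hx hz
  have hn : (0 : ℝ) ≤ ‖x‖ := norm_nonneg x
  have hs : 0 < r - ‖x‖ := by linarith
  have hA : 0 < r ^ 2 - ‖x‖ ^ 2 := by nlinarith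
  have hxz : x - z ≠ 0 := by
    intro h; rw [sub_eq_zero] at h; subst h; linarith
  have hm0 : 0 < ‖x - z‖ := norm_pos_iff.mpr hxz
  have hP : 0 < ‖x - z‖ ^ 2 := by positivity
  have hz2 : 0 < ‖z‖ ^ 2 - r ^ 2 := by nlinarith
  set c : ℝ := Real.Gamma ((d : ℝ) / 2) * Real.sin (Real.pi * α / 2) *
      Real.pi ^ (-(d : ℝ) / 2 - 1) * (‖z‖ ^ 2 - r ^ 2) ^ (-(α / 2)) with hcdef
  have hc0 : 0 < c := by
    have h1 : 0 < Real.Gamma ((d : ℝ) / 2) := Real.Gamma_pos_of_pos (by positivity)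
    have h2 : 0 < Real.sin (Real.pi * α / 2) := by
      apply Real.sin_pos_of_pos_of_lt_pi
      · positivity
      · nlinarith [Real.pi_pos]
    have h3 : (0 : ℝ) < Real.pi ^ (-(d : ℝ) / 2 - 1) :=
      Real.rpow_pos_of_pos Real.pi_pos _
    have h4 : (0 : ℝ) < (‖z‖ ^ 2 - r ^ 2) ^ (-(α / 2)) :=
      Real.rpow_pos_of_pos hz2 _
    positivity
  have hG : 0 < Gfun d α r z x :=
    mul_pos (Real.rpow_pos_of_pos hA _) (Real.rpow_pos_of_pos hP _)
  have hfun : (fun w => stablePoissonKernel d α r w z) = fun w => c * Gfun d α r z w := by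
    funext w
    rw [poissonKernel_eq]
  have hK : stablePoissonKernel d α r x z = c * Gfun d α r z x := by rw [poissonKernel_eq]
  have hDf : ∀ w : EuclideanSpace ℝ (Fin d), ‖w‖ < r →
      HasFDerivAt (fun w => stablePoissonKernel d α r w z) (c • Dfun d α r z w) w := by
    intro w hw
    rw [hfun]
    exact (hasFDerivAt_Gfun d α r z w hw hz).const_mul c
  have hαd : α + (d : ℝ) ≤ (d : ℝ) + 2 := by linarith
  have hSpos : (0 : ℝ) < (r - ‖x‖)⁻¹ := inv_pos.mpr hs
  constructor
  · rw [(hDf x hx).fderiv, norm_smul_clm, abs_of_pos hc0]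
    have h1 := norm_Dfun_le d α r z x hα0 hx hz hG.le
    calc c * ‖Dfun d α r z x‖
        ≤ c * (Gfun d α r z x * ((α + d) * (r - ‖x‖)⁻¹)) := by gcongr
      _ ≤ c * (Gfun d α r z x * ((((d : ℝ) + 2) ^ 2 + 3 * (d : ℝ) + 6) * (r - ‖x‖)⁻¹)) := by
          have hC : α + (d : ℝ) ≤ ((d : ℝ) + 2) ^ 2 + 3 * (d : ℝ) + 6 := by nlinarith
          exact mul_le_mul_of_nonneg_left (mul_le_mul_of_nonneg_left
            (mul_le_mul_of_nonneg_right hC hSpos.le) hG.le) hc0.le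
      _ = (((d : ℝ) + 2) ^ 2 + 3 * (d : ℝ) + 6) * stablePoissonKernel d α r x z / (r - ‖x‖) := by
          rw [hK]; field_simp
  · intro i j
    set v : EuclideanSpace ℝ (Fin d) := EuclideanSpace.single i (1 : ℝ) with hvdef
    set u : EuclideanSpace ℝ (Fin d) := EuclideanSpace.single j (1 : ℝ) with hudef
    have hv : ‖v‖ = 1 := by rw [hvdef, EuclideanSpace.norm_single, norm_one]
    have hu : ‖u‖ = 1 := by rw [hudef, EuclideanSpace.norm_single, norm_one]
    have hball : Metric.ball (0 : EuclideanSpace ℝ (Fin d)) r ∈ nhds x :=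
      Metric.isOpen_ball.mem_nhds (by simpa [mem_ball_zero_iff] using hx)
    have hev : (fun w => fderiv ℝ (fun w' => stablePoissonKernel d α r w' z) w v) =ᶠ[nhds x]
        (fun w => c * (Gfun d α r z w * psiF d α r z v w)) := by
      filter_upwards [hball] with w hw
      rw [mem_ball_zero_iff] at hw
      rw [(hDf w hw).fderiv, ContinuousLinearMap.smul_apply, Dfun_apply, smul_eq_mul]
    have hψ := hasFDerivAt_psiF d α r z x v hx hz
    have hφ := ((hasFDerivAt_Gfun d α r z x hx hz).mul hψ).const_mul c
    have hSP : secondPartial (fun w => stablePoissonKernel d α r w z) x i j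
        = c * (Gfun d α r z x *
            (((-α) • (((r ^ 2 - ‖x‖ ^ 2)⁻¹) • innerSL ℝ v +
              ⟪v, x⟫ • ((-((r ^ 2 - ‖x‖ ^ 2) ^ 2)⁻¹) • ((-2 : ℝ) • innerSL ℝ x))) +
             (-(d : ℝ)) • (((‖x - z‖ ^ 2)⁻¹) • innerSL ℝ v +
              ⟪v, x - z⟫ • ((-((‖x - z‖ ^ 2) ^ 2)⁻¹) • ((2 : ℝ) • innerSL ℝ (x - z))))) u)
            + psiF d α r z v x * (Gfun d α r z x * psiF d α r z u x)) := by
      rw [secondPartial, hev.fderiv_eq, show (fun w => c * (Gfun d α r z w * psiF d α r z v w))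
        = fun y => c * (Gfun d α r z * psiF d α r z v) y from rfl, hφ.fderiv]
      rw [ContinuousLinearMap.smul_apply, ContinuousLinearMap.add_apply,
        ContinuousLinearMap.smul_apply, ContinuousLinearMap.smul_apply, Dfun_apply]
      simp only [smul_eq_mul]
      rfl
    rw [hSP]
    have hMb := norm_Mpsi_le d α r z x v hα0 hx hz hv
    have hMu : |(((-α) • (((r ^ 2 - ‖x‖ ^ 2)⁻¹) • innerSL ℝ v +
              ⟪v, x⟫ • ((-((r ^ 2 - ‖x‖ ^ 2) ^ 2)⁻¹) • ((-2 : ℝ) • innerSL ℝ x))) +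
             (-(d : ℝ)) • (((‖x - z‖ ^ 2)⁻¹) • innerSL ℝ v +
              ⟪v, x - z⟫ • ((-((‖x - z‖ ^ 2) ^ 2)⁻¹) • ((2 : ℝ) • innerSL ℝ (x - z))))) u)|
        ≤ (3 * (α + d)) * ((r - ‖x‖)⁻¹ * (r - ‖x‖)⁻¹) := by
      refine le_trans ?_ hMb
      have h := ContinuousLinearMap.le_opNorm (((-α) • (((r ^ 2 - ‖x‖ ^ 2)⁻¹) • innerSL ℝ v +
              ⟪v, x⟫ • ((-((r ^ 2 - ‖x‖ ^ 2) ^ 2)⁻¹) • ((-2 : ℝ) • innerSL ℝ x))) +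
             (-(d : ℝ)) • (((‖x - z‖ ^ 2)⁻¹) • innerSL ℝ v +
              ⟪v, x - z⟫ • ((-((‖x - z‖ ^ 2) ^ 2)⁻¹) • ((2 : ℝ) • innerSL ℝ (x - z)))))) u
      rw [hu, mul_one] at h
      exact (Real.norm_eq_abs _).symm.trans_le h
    have hψv := abs_psiF_le d α r z x v hα0 hx hz hv
    have hψu := abs_psiF_le d α r z x u hα0 hx hz hu
    calc |c * (Gfun d α r z x * _ + psiF d α r z v x * (Gfun d α r z x * psiF d α r z u x))|
        ≤ c * (Gfun d α r z x * ((3 * (α + d)) * ((r - ‖x‖)⁻¹ * (r - ‖x‖)⁻¹))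
            + ((α + d) * (r - ‖x‖)⁻¹) * (Gfun d α r z x * ((α + d) * (r - ‖x‖)⁻¹))) := by
          rw [abs_mul, abs_of_pos hc0]
          gcongr
          refine (abs_add_le _ _).trans ?_
          gcongr
          · rw [abs_mul, abs_of_pos hG]
            gcongr
          · rw [abs_mul, abs_mul, abs_of_pos hG]
            gcongr
      _ ≤ c * ((((d : ℝ) + 2) ^ 2 + 3 * (d : ℝ) + 6) * Gfun d α r z x
            * ((r - ‖x‖)⁻¹ * (r - ‖x‖)⁻¹)) := by
          have h1 : 3 * (α + d) + (α + d) ^ 2 ≤ ((d : ℝ) + 2) ^ 2 + 3 * (d : ℝ) + 6 := by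
            nlinarith
          have key : Gfun d α r z x * ((3 * (α + d)) * ((r - ‖x‖)⁻¹ * (r - ‖x‖)⁻¹))
              + ((α + d) * (r - ‖x‖)⁻¹) * (Gfun d α r z x * ((α + d) * (r - ‖x‖)⁻¹))
              ≤ (((d : ℝ) + 2) ^ 2 + 3 * (d : ℝ) + 6) * Gfun d α r z x
                * ((r - ‖x‖)⁻¹ * (r - ‖x‖)⁻¹) := by
            nlinarith [mul_pos hSpos hSpos, hG, mul_pos hG (mul_pos hSpos hSpos)]
          exact mul_le_mul_of_nonneg_left key hc0.le
      _ = (((d : ℝ) + 2) ^ 2 + 3 * (d : ℝ) + 6) * stablePoissonKernel d α r x z / (r - ‖x‖) ^ 2 := by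
          rw [hK]
          field_simp
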